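/- Let δ ∈ (0,1] and a = (2+δ)/(1+δ), and define h(x) = x·|log₂ x|^a / |x−1| for x > 0, x ≠ 1. Then (i) h is an increasing function on (1,∞), and (ii) h(x) ≤ 2 for all x ∈ (0,1). -/

import Mathlib

/-!
With `a ≥ 1`, on `(1, ∞)` the function factors as `(log_b x)^(a-1) · (x log x / (x - 1)) / log b`:
a nondecreasing positive factor times `x log x / (x - 1)`, which is the slope of the strictly
concave `log` between `x⁻¹` and `1` and hence strictly increasing.
On `(0, 1)`, substituting `x = 2⁻ᵗ` turns the bound into `tᵃ ≤ 2 (2ᵗ - 1)` for `t > 0`; since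
`tᵃ ≤ max t t²` for `1 ≤ a ≤ 2`, this follows from the linear and cubic Taylor lower bounds for
`2ᵗ = exp (t log 2)` and `log 2 > 0.69`.
-/

open Real Set

lemma mul_log_div_sub_one_eq_log_inv_div {x : ℝ} (hx0 : x ≠ 0) (hx1 : x ≠ 1) :
    x * log x / (x - 1) = (log x⁻¹ - log 1) / (x⁻¹ - 1) := by
  have : x - 1 ≠ 0 := sub_ne_zero.mpr hx1
  rw [log_inv, log_one]
  field_simp
  ring

lemma strictMonoOn_mul_log_div_sub_one :
    StrictMonoOn (fun x : ℝ => x * log x / (x - 1)) (Ioi 1) := by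
  intro x (hx : 1 < x) y (hy : 1 < y) hxy
  simp only
  rw [mul_log_div_sub_one_eq_log_inv_div (by positivity) hx.ne',
    mul_log_div_sub_one_eq_log_inv_div (by positivity) hy.ne']
  exact strictConcaveOn_log_Ioi.secant_strict_mono (mem_Ioi.mpr one_pos)
    (inv_pos.mpr (by linarith : (0 : ℝ) < y)) (inv_pos.mpr (by linarith : (0 : ℝ) < x))
    (inv_ne_one.mpr hy.ne') (inv_ne_one.mpr hx.ne') (inv_strictAnti₀ (by positivity) hxy)

lemma strictMonoOn_mul_logb_rpow_div_sub_one {b a : ℝ} (hb : 1 < b) (ha : 1 ≤ a) :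
    StrictMonoOn (fun x : ℝ => x * logb b x ^ a / (x - 1)) (Ioi 1) := by
  have hlogb : 0 < log b := log_pos hb
  have hfactor : EqOn (fun x => logb b x ^ (a - 1) * (x * log x / (x - 1)) / log b)
      (fun x => x * logb b x ^ a / (x - 1)) (Ioi 1) := by
    intro x (hx : 1 < x)
    have := (log_pos hx).ne'
    simp only
    rw [rpow_sub_one (logb_pos hb hx).ne', logb]
    field_simp
  refine StrictMonoOn.congr (fun x (hx : 1 < x) y (hy : 1 < y) hxy => ?_) hfactor
  refine div_lt_div_of_pos_right (mul_lt_mul' ?_ (strictMonoOn_mul_log_div_sub_one hx hy hxy)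
    (by have := log_pos hx; positivity) (rpow_pos_of_pos (logb_pos hb hy) _)) hlogb
  exact rpow_le_rpow (logb_pos hb hx).le (logb_le_logb_of_le hb (by positivity) hxy.le)
    (by linarith)

lemma self_le_two_mul_two_rpow_sub_one {t : ℝ} (ht : 0 ≤ t) : t ≤ 2 * (2 ^ t - 1) := by
  have hexp := add_one_le_exp (log 2 * t)
  rw [← rpow_def_of_pos two_pos] at hexp
  nlinarith [log_two_gt_d9]

lemma sq_le_two_mul_two_rpow_sub_one {t : ℝ} (ht : 0 ≤ t) : t ^ 2 ≤ 2 * (2 ^ t - 1) := by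
  have hc := log_two_gt_d9
  set c := log 2
  have hexp := sum_le_exp_of_nonneg (mul_nonneg (by linarith) ht : 0 ≤ c * t) 4
  rw [← rpow_def_of_pos two_pos] at hexp
  simp only [Finset.sum_range_succ, Finset.sum_range_zero, Nat.factorial] at hexp
  norm_num at hexp
  have hc2 : (0.48 : ℝ) ≤ c ^ 2 := by nlinarith
  have hc3 : (0.333 : ℝ) ≤ c ^ 3 := by nlinarith
  have hquad : 0 ≤ c ^ 3 / 3 * t ^ 2 - (1 - c ^ 2) * t + 2 * c := by
    nlinarith [sq_nonneg (t - 2.35)]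
  nlinarith [mul_nonneg ht hquad]

lemma rpow_le_two_mul_two_rpow_sub_one {a t : ℝ} (ha1 : 1 ≤ a) (ha2 : a ≤ 2) (ht : 0 < t) :
    t ^ a ≤ 2 * (2 ^ t - 1) := by
  rcases le_or_gt t 1 with ht1 | ht1
  · calc t ^ a ≤ t ^ (1 : ℝ) := rpow_le_rpow_of_exponent_ge ht ht1 ha1
      _ ≤ 2 * (2 ^ t - 1) := by simpa using self_le_two_mul_two_rpow_sub_one ht.le
  · calc t ^ a ≤ t ^ (2 : ℝ) := rpow_le_rpow_of_exponent_le ht1.le ha2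
      _ ≤ 2 * (2 ^ t - 1) := by simpa using sq_le_two_mul_two_rpow_sub_one ht.le

lemma mul_abs_logb_two_rpow_div_abs_sub_one_le_two {a x : ℝ} (ha1 : 1 ≤ a) (ha2 : a ≤ 2)
    (hx : x ∈ Ioo 0 1) : x * |logb 2 x| ^ a / |x - 1| ≤ 2 := by
  obtain ⟨hx0, hx1⟩ := hx
  have hlogb : logb 2 x < 0 := logb_neg one_lt_two hx0 hx1
  have htwo_rpow : (2 : ℝ) ^ (-logb 2 x) = x⁻¹ := by
    rw [rpow_neg zero_le_two, rpow_logb two_pos (by norm_num) hx0]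
  have key := rpow_le_two_mul_two_rpow_sub_one ha1 ha2 (neg_pos.mpr hlogb)
  rw [htwo_rpow] at key
  rw [abs_of_neg hlogb, abs_of_neg (sub_neg.mpr hx1), div_le_iff₀ (by linarith)]
  calc x * (-logb 2 x) ^ a ≤ x * (2 * (x⁻¹ - 1)) := mul_le_mul_of_nonneg_left key hx0.le
    _ = 2 * -(x - 1) := by field_simp; ring

/-- **Properties of `h(x) = x·|log₂ x|^{(2+δ)/(1+δ)} / |x−1|`:** it is increasing on `(1,∞)` and
bounded by `2` on `(0,1)`. -/
theorem h_increasing_and_bounded (δ : ℝ) (hδ : δ ∈ Set.Ioc (0:ℝ) 1) :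
    StrictMonoOn
      (fun x : ℝ => x * |Real.logb 2 x| ^ ((2 + δ) / (1 + δ)) / |x - 1|) (Set.Ioi 1) ∧
    ∀ x ∈ Set.Ioo (0:ℝ) 1,
      x * |Real.logb 2 x| ^ ((2 + δ) / (1 + δ)) / |x - 1| ≤ 2 := by
  obtain ⟨hδ0, hδ1⟩ := hδ
  have ha1 : 1 ≤ (2 + δ) / (1 + δ) := by rw [le_div_iff₀ (by linarith)]; linarith
  have ha2 : (2 + δ) / (1 + δ) ≤ 2 := by rw [div_le_iff₀ (by linarith)]; linarith
  refine ⟨(strictMonoOn_mul_logb_rpow_div_sub_one one_lt_two ha1).congr fun x (hx : 1 < x) => ?_,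
    fun x hx => mul_abs_logb_two_rpow_div_abs_sub_one_le_two ha1 ha2 hx⟩
  simp only [abs_of_pos (logb_pos one_lt_two hx), abs_of_pos (sub_pos.mpr hx)]
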